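/- arXiv:1909.10206 — 6 statements merged into one kernel-verified Lean document; each statement's English description precedes it below -/
import Mathlib

section
/- Let (a,b) be a unimodular (N,Z)-CZCP with a_0 = b_0 = 1. Then a_i = b_i and a_{N-1-i} = -b_{N-1-i} for all i ∈ {0,1,...,Z-1}. -/
open Finset

/-- Aperiodic cross-correlation of length-`N` complex sequences at shift `τ`. -/
noncomputable def rho (N : ℕ) (a b : ℕ → ℂ) (τ : ℕ) : ℂ :=
  ∑ n ∈ Finset.range (N - τ), a n * (starRingEnd ℂ) (b (n + τ))

/-!
Put `c = a + b` and `d = a - b`. On the shifts `τ ∈ [N - Z, N - 1]` both conditions together say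
exactly that `c` and `d` have vanishing aperiodic autocorrelation there. At shift `N - 1 - i` the
autocorrelation of `x` is `∑_{n ≤ i} x_n conj x_{N-1-(i-n)}`. Inducting on `i`, once the tail
entries `c_{N-1-j}`, `j < i`, vanish only the term `c_0 conj c_{N-1-i}` survives, and `c_0 = 2`;
once the head entries `d_j`, `j < i`, vanish only `d_i conj d_{N-1}` survives, and
`d_{N-1} = 2 a_{N-1} ≠ 0`. Finally `Z < N`, since at shift `0` the autocorrelation of `c` is
`∑ |c_n|² ≥ |c_0|² > 0`.
-/

namespace rho

variable {N : ℕ}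

theorem add_self (a b : ℕ → ℂ) (τ : ℕ) :
    rho N (a + b) (a + b) τ = rho N a a τ + rho N b b τ + (rho N a b τ + rho N b a τ) := by
  simp only [rho, Pi.add_apply, map_add, ← sum_add_distrib]
  exact sum_congr rfl fun _ _ ↦ by ring

theorem sub_self (a b : ℕ → ℂ) (τ : ℕ) :
    rho N (a - b) (a - b) τ = rho N a a τ + rho N b b τ - (rho N a b τ + rho N b a τ) := by
  simp only [rho, Pi.sub_apply, map_sub, ← sum_add_distrib, ← sum_sub_distrib]
  exact sum_congr rfl fun _ _ ↦ by ring

theorem self_zero (c : ℕ → ℂ) : rho N c c 0 = ((∑ n ∈ range N, Complex.normSq (c n) : ℝ) : ℂ) := by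
  simp [rho, Complex.mul_conj]

theorem apply_eq_zero_of_self_zero_eq_zero {c : ℕ → ℂ} (h : rho N c c 0 = 0) {n : ℕ}
    (hn : n < N) : c n = 0 := by
  rw [self_zero, Complex.ofReal_eq_zero,
    sum_eq_zero_iff_of_nonneg fun _ _ ↦ Complex.normSq_nonneg _] at h
  exact Complex.normSq_eq_zero.mp (h n (mem_range.mpr hn))

theorem tail_eq_zero {Z : ℕ} (hZ : Z ≤ N) {c : ℕ → ℂ} (hc0 : c 0 ≠ 0)
    (h : ∀ i < Z, rho N c c (N - 1 - i) = 0) : ∀ i < Z, c (N - 1 - i) = 0 := by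
  intro i
  induction i using Nat.strong_induction_on with
  | _ i ih =>
    intro hi
    have hsum := h i hi
    rw [rho, show N - (N - 1 - i) = i + 1 by omega, sum_range_succ'] at hsum
    have hinner : ∀ n ∈ range i, c (n + 1) * (starRingEnd ℂ) (c (n + 1 + (N - 1 - i))) = 0 := by
      intro n hn
      rw [mem_range] at hn
      rw [show n + 1 + (N - 1 - i) = N - 1 - (i - n - 1) by omega, ih _ (by omega) (by omega),
        map_zero, mul_zero]
    rw [sum_eq_zero hinner, zero_add, zero_add] at hsum
    simpa [hc0] using hsum

theorem head_eq_zero {Z : ℕ} (hZ : Z ≤ N) {d : ℕ → ℂ} (hd : d (N - 1) ≠ 0)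
    (h : ∀ i < Z, rho N d d (N - 1 - i) = 0) : ∀ i < Z, d i = 0 := by
  intro i
  induction i using Nat.strong_induction_on with
  | _ i ih =>
    intro hi
    have hsum := h i hi
    rw [rho, show N - (N - 1 - i) = i + 1 by omega, sum_range_succ,
      show i + (N - 1 - i) = N - 1 by omega] at hsum
    have hinner : ∀ n ∈ range i, d n * (starRingEnd ℂ) (d (n + (N - 1 - i))) = 0 := by
      intro n hn
      rw [mem_range] at hn
      rw [ih n hn (by omega), zero_mul]
    rw [sum_eq_zero hinner, zero_add] at hsum
    simpa [hd] using hsum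

end rho

theorem stmt5_general (N Z : ℕ) (hN : 1 ≤ N) (a b : ℕ → ℂ)
    (ha : ∀ n < N, ‖a n‖ = 1)
    (ha0 : a 0 = 1) (hb0 : b 0 = 1)
    (hC1 : ∀ τ, (1 ≤ τ ∧ τ ≤ Z) ∨ (N - Z ≤ τ ∧ τ ≤ N - 1) →
      rho N a a τ + rho N b b τ = 0)
    (hC2 : ∀ τ, N - Z ≤ τ → τ ≤ N - 1 → rho N a b τ + rho N b a τ = 0) :
    ∀ i < Z, a i = b i ∧ a (N - 1 - i) = -b (N - 1 - i) := by
  have hsum : ∀ τ, N - Z ≤ τ → τ ≤ N - 1 → rho N (a + b) (a + b) τ = 0 := fun τ h₁ h₂ ↦ by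
    rw [rho.add_self, hC1 τ (Or.inr ⟨h₁, h₂⟩), hC2 τ h₁ h₂, add_zero]
  have hdiff : ∀ τ, N - Z ≤ τ → τ ≤ N - 1 → rho N (a - b) (a - b) τ = 0 := fun τ h₁ h₂ ↦ by
    rw [rho.sub_self, hC1 τ (Or.inr ⟨h₁, h₂⟩), hC2 τ h₁ h₂, sub_zero]
  have hc0 : (a + b) 0 ≠ 0 := by norm_num [ha0, hb0]
  have hZN : Z < N := by
    by_contra! hNZ
    exact hc0 (rho.apply_eq_zero_of_self_zero_eq_zero (hsum 0 (by omega) (by omega)) hN)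
  have htail := rho.tail_eq_zero hZN.le hc0 fun i hi ↦ hsum _ (by omega) (by omega)
  intro i hi
  have hd : (a - b) (N - 1) ≠ 0 := by
    have hlast : a (N - 1) + b (N - 1) = 0 := by simpa using htail 0 (by omega)
    have ha_ne : a (N - 1) ≠ 0 := norm_ne_zero_iff.mp (by rw [ha _ (by omega)]; norm_num)
    rw [Pi.sub_apply, eq_neg_of_add_eq_zero_right hlast]
    simpa [← two_mul] using ha_ne
  have hhead := rho.head_eq_zero hZN.le hd fun i hi ↦ hdiff _ (by omega) (by omega)
  exact ⟨sub_eq_zero.mp (hhead i hi), eq_neg_of_add_eq_zero_left (htail i hi)⟩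

/-- For a unimodular (N,Z)-CZCP (a,b) with a_0 = b_0 = 1, we have a_i = b_i and
a_{N-1-i} = -b_{N-1-i} for all i ∈ {0,...,Z-1}. -/
theorem stmt5 (N Z : ℕ) (hN : 1 ≤ N) (a b : ℕ → ℂ)
    (ha : ∀ n < N, ‖a n‖ = 1) (hb : ∀ n < N, ‖b n‖ = 1)
    (ha0 : a 0 = 1) (hb0 : b 0 = 1)
    (hC1 : ∀ τ, (1 ≤ τ ∧ τ ≤ Z) ∨ (N - Z ≤ τ ∧ τ ≤ N - 1) →
      rho N a a τ + rho N b b τ = 0)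
    (hC2 : ∀ τ, N - Z ≤ τ → τ ≤ N - 1 → rho N a b τ + rho N b a τ = 0) :
    ∀ i < Z, a i = b i ∧ a (N - 1 - i) = -b (N - 1 - i) :=
  stmt5_general N Z hN a b ha ha0 hb0 hC1 hC2
end

section
/- Every unimodular (N,Z)-CZCP satisfies Z ≤ N/2. In particular, if (a,b) is an (N,Z)-CZCP with unimodular entries, then 2Z ≤ N. -/
/-!
Put `u = a + b` and `v = a - b`. The cross-correlation conditions at the tail shifts say exactly that
the autocorrelations of `u` and of `v` vanish at the `Z` largest shifts `N - 1 - k`, `k < Z`, and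
unimodularity says that `u` and `v` never vanish at the same index. At shift `N - 1 - k` the
autocorrelation of `u` is `∑_{n ≤ k} u n * conj (u (n + N - 1 - k))`, so if `u (N - 1) ≠ 0` the
first `Z` entries of `u` vanish one after the other; then `v 0 ≠ 0`, and in the same way the last
`Z` entries of `v` vanish. If `2 Z > N` these two blocks overlap at the index `N - Z`.
-/

open Finset

section Sesquilinear

variable (N : ℕ) (a b c : ℕ → ℂ) (τ : ℕ)

lemma rho_add_left : rho N (a + b) c τ = rho N a c τ + rho N b c τ := by
  simp only [rho, Pi.add_apply, add_mul, sum_add_distrib]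

lemma rho_add_right : rho N a (b + c) τ = rho N a b τ + rho N a c τ := by
  simp only [rho, Pi.add_apply, map_add, mul_add, sum_add_distrib]

lemma rho_sub_left : rho N (a - b) c τ = rho N a c τ - rho N b c τ := by
  simp only [rho, Pi.sub_apply, sub_mul, sum_sub_distrib]

lemma rho_sub_right : rho N a (b - c) τ = rho N a b τ - rho N a c τ := by
  simp only [rho, Pi.sub_apply, map_sub, mul_sub, sum_sub_distrib]

lemma rho_add_add :
    rho N (a + b) (a + b) τ = (rho N a a τ + rho N b b τ) + (rho N a b τ + rho N b a τ) := by
  rw [rho_add_left, rho_add_right, rho_add_right]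
  ring

lemma rho_sub_sub :
    rho N (a - b) (a - b) τ = (rho N a a τ + rho N b b τ) - (rho N a b τ + rho N b a τ) := by
  rw [rho_sub_left, rho_sub_right, rho_sub_right]
  ring

end Sesquilinear

lemma rho_sub_one_sub {N k : ℕ} (a b : ℕ → ℂ) (hk : k < N) :
    rho N a b (N - 1 - k) = ∑ n ∈ range (k + 1), a n * (starRingEnd ℂ) (b (n + (N - 1 - k))) := by
  rw [rho, show N - (N - 1 - k) = k + 1 by omega]

def AutocorrVanishesOnTail (N Z : ℕ) (u : ℕ → ℂ) : Prop :=
  ∀ k < Z, rho N u u (N - 1 - k) = 0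

namespace AutocorrVanishesOnTail

variable {N Z : ℕ} {u v : ℕ → ℂ}

lemma eq_zero_of_last_ne_zero (hu : AutocorrVanishesOnTail N Z u) (hZN : Z ≤ N)
    (hlast : u (N - 1) ≠ 0) : ∀ k < Z, u k = 0 := by
  intro k
  induction k using Nat.strong_induction_on with
  | _ k ih =>
    intro hk
    have h := hu k hk
    rw [rho_sub_one_sub u u (by omega), sum_range_succ,
      sum_eq_zero fun n hn => by rw [ih n (mem_range.1 hn) ((mem_range.1 hn).trans hk), zero_mul],
      zero_add, show k + (N - 1 - k) = N - 1 by omega] at h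
    exact (mul_eq_zero.1 h).resolve_right ((map_ne_zero _).2 hlast)

lemma eq_zero_of_head_ne_zero (hu : AutocorrVanishesOnTail N Z u) (hZN : Z ≤ N)
    (hhead : u 0 ≠ 0) : ∀ k < Z, u (N - 1 - k) = 0 := by
  intro k
  induction k using Nat.strong_induction_on with
  | _ k ih =>
    intro hk
    have h := hu k hk
    rw [rho_sub_one_sub u u (by omega), sum_range_succ',
      sum_eq_zero fun n hn => by
        simp only [mem_range] at hn
        rw [show n + 1 + (N - 1 - k) = N - 1 - (k - 1 - n) by omega,
          ih (k - 1 - n) (by omega) (by omega), map_zero, mul_zero],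
      zero_add, zero_add] at h
    exact (map_eq_zero _).1 ((mul_eq_zero.1 h).resolve_left hhead)

lemma false_of_last_ne_zero (hu : AutocorrVanishesOnTail N Z u)
    (hv : AutocorrVanishesOnTail N Z v) (hZN : Z ≤ N) (hNZ : N < 2 * Z)
    (huv : ∀ n < N, u n ≠ 0 ∨ v n ≠ 0) (hlast : u (N - 1) ≠ 0) : False := by
  have hu_head := hu.eq_zero_of_last_ne_zero hZN hlast
  have hv_last := hv.eq_zero_of_head_ne_zero hZN
    ((huv 0 (by omega)).resolve_left (not_not.2 (hu_head 0 (by omega))))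
  rcases huv (N - Z) (by omega) with h | h
  · exact h (hu_head (N - Z) (by omega))
  · exact h (by simpa [show N - 1 - (Z - 1) = N - Z by omega] using hv_last (Z - 1) (by omega))

lemma false_of_no_common_zero (hu : AutocorrVanishesOnTail N Z u)
    (hv : AutocorrVanishesOnTail N Z v) (hZN : Z ≤ N) (hNZ : N < 2 * Z)
    (huv : ∀ n < N, u n ≠ 0 ∨ v n ≠ 0) : False := by
  by_cases hlast : u (N - 1) = 0
  · refine hv.false_of_last_ne_zero hu hZN hNZ (fun n hn => (huv n hn).symm) ?_
    exact (huv (N - 1) (by omega)).resolve_left (not_not.2 hlast)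
  · exact hu.false_of_last_ne_zero hv hZN hNZ huv hlast

end AutocorrVanishesOnTail

lemma add_ne_zero_or_sub_ne_zero {x y : ℂ} (hx : x ≠ 0) : x + y ≠ 0 ∨ x - y ≠ 0 := by
  by_contra! h
  exact hx (by linear_combination (h.1 + h.2) / 2)

theorem stmt6_general (N Z : ℕ) (hN : 1 ≤ N) (a b : ℕ → ℂ)
    (ha : ∀ n < N, ‖a n‖ = 1)
    (hC1 : ∀ τ, (1 ≤ τ ∧ τ ≤ Z) ∨ (N - Z ≤ τ ∧ τ ≤ N - 1) →
      rho N a a τ + rho N b b τ = 0)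
    (hC2 : ∀ τ, N - Z ≤ τ → τ ≤ N - 1 → rho N a b τ + rho N b a τ = 0) :
    2 * Z ≤ N := by
  by_contra! hNZ
  -- For `k ≥ N` the shift `N - 1 - k` truncates to `0`, so the tail is cut to length `min Z N`.
  have hshift : ∀ k < min Z N,
      rho N a a (N - 1 - k) + rho N b b (N - 1 - k) = 0 ∧
        rho N a b (N - 1 - k) + rho N b a (N - 1 - k) = 0 := fun k hk =>
    ⟨hC1 _ (Or.inr ⟨by omega, by omega⟩), hC2 _ (by omega) (by omega)⟩
  have hu : AutocorrVanishesOnTail N (min Z N) (a + b) := fun k hk => by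
    rw [rho_add_add, (hshift k hk).1, (hshift k hk).2, add_zero]
  have hv : AutocorrVanishesOnTail N (min Z N) (a - b) := fun k hk => by
    rw [rho_sub_sub, (hshift k hk).1, (hshift k hk).2, sub_zero]
  refine hu.false_of_no_common_zero hv (min_le_right _ _) (by omega) fun n hn => ?_
  exact add_ne_zero_or_sub_ne_zero (norm_ne_zero_iff.1 (by rw [ha n hn]; exact one_ne_zero))

/-- Every unimodular (N,Z)-CZCP satisfies 2Z ≤ N. -/
theorem stmt6 (N Z : ℕ) (hN : 1 ≤ N) (a b : ℕ → ℂ)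
    (ha : ∀ n < N, ‖a n‖ = 1) (hb : ∀ n < N, ‖b n‖ = 1)
    (hC1 : ∀ τ, (1 ≤ τ ∧ τ ≤ Z) ∨ (N - Z ≤ τ ∧ τ ≤ N - 1) →
      rho N a a τ + rho N b b τ = 0)
    (hC2 : ∀ τ, N - Z ≤ τ → τ ≤ N - 1 → rho N a b τ + rho N b a τ = 0) :
    2 * Z ≤ N :=
  stmt6_general N Z hN a b ha hC1 hC2
end

section
/- A binary (N,Z)-CZCP over {-1,+1} with Z ≥ 1 must have even length N. -/
/-!
Put `N = m + 1`. The shift-`1` condition says that the `2m` signs `a n a (n+1)`, `b n b (n+1)`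
sum to zero, so exactly `m` of them are `-1` and their product is `(-1)^m`. The product
telescopes to `(a 0 a m) (b 0 b m)`, which the shift-`m` condition `a 0 a m + b 0 b m = 0` forces
to be `-1`. Hence `m` is odd.
-/

open Finset

/-- Aperiodic cross-correlation of length-`N` real sequences at shift `τ`. -/
noncomputable def rhoR (N : ℕ) (a b : ℕ → ℝ) (τ : ℕ) : ℝ :=
  ∑ n ∈ Finset.range (N - τ), a n * b (n + τ)

theorem exists_sum_eq_and_prod_eq_neg_one_pow {ι R : Type*} [CommRing R] (s : Finset ι)
    (f : ι → R) (hf : ∀ i ∈ s, f i = 1 ∨ f i = -1) :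
    ∃ k : ℕ, ∑ i ∈ s, f i = #s - 2 * k ∧ ∏ i ∈ s, f i = (-1) ^ k := by
  classical
  have hpos : ∀ i ∈ s.filter (f · ≠ -1), f i = 1 := fun i hi => by
    rw [mem_filter] at hi
    exact (hf i hi.1).resolve_right hi.2
  refine ⟨#(s.filter (f · = -1)), ?_, ?_⟩
  · rw [← sum_filter_add_sum_filter_not s (f · = -1),
      sum_congr rfl fun i hi => (mem_filter.1 hi).2, sum_congr rfl hpos,
      ← card_filter_add_card_filter_not (s := s) (f · = -1)]
    simp only [sum_const, nsmul_eq_mul, mul_neg, mul_one, Nat.cast_add]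
    ring
  · rw [← prod_filter_mul_prod_filter_not s (f · = -1),
      prod_congr rfl fun i hi => (mem_filter.1 hi).2, prod_congr rfl hpos, prod_const,
      prod_const_one, mul_one]

theorem prod_range_mul_succ_eq {M : Type*} [CommMonoid M] (x : ℕ → M) (m : ℕ)
    (hx : ∀ n ≤ m, x n * x n = 1) :
    ∏ n ∈ range m, x n * x (n + 1) = x 0 * x m := by
  induction m with
  | zero => exact (hx 0 le_rfl).symm
  | succ m ih =>
    rw [prod_range_succ, ih fun n hn => hx n (hn.trans m.le_succ)]
    calc x 0 * x m * (x m * x (m + 1)) = x 0 * (x m * x m) * x (m + 1) := by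
          simp only [mul_assoc]
      _ = x 0 * x (m + 1) := by rw [hx m m.le_succ, mul_one]

theorem exists_rhoR_one_eq_and_mul_eq_neg_one_pow (m : ℕ) (x : ℕ → ℝ)
    (hx : ∀ n < m + 1, x n = 1 ∨ x n = -1) :
    ∃ k : ℕ, rhoR (m + 1) x x 1 = m - 2 * k ∧ x 0 * x m = (-1) ^ k := by
  obtain ⟨k, hsum, hprod⟩ := exists_sum_eq_and_prod_eq_neg_one_pow (range m)
    (fun n => x n * x (n + 1)) fun n hn => by
      have := mem_range.1 hn
      rcases hx n (by omega) with h | h <;> rcases hx (n + 1) (by omega) with h' | h' <;>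
        simp [h, h']
  refine ⟨k, by simpa [rhoR] using hsum, ?_⟩
  rw [← hprod, prod_range_mul_succ_eq x m fun n hn => mul_self_eq_one_iff.2 (hx n (by omega))]

theorem rhoR_add_one_last (m : ℕ) (x y : ℕ → ℝ) : rhoR (m + 1) x y m = x 0 * y m := by
  simp [rhoR]

theorem stmt7_general (N Z : ℕ) (hZ : 1 ≤ Z) (a b : ℕ → ℝ)
    (ha : ∀ n < N, a n = 1 ∨ a n = -1) (hb : ∀ n < N, b n = 1 ∨ b n = -1)
    (hC1 : ∀ τ, (1 ≤ τ ∧ τ ≤ Z) ∨ (N - Z ≤ τ ∧ τ ≤ N - 1) →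
      rhoR N a a τ + rhoR N b b τ = 0) :
    Even N := by
  obtain _ | m := N
  · exact ⟨0, rfl⟩
  obtain ⟨ka, hsa, hpa⟩ := exists_rhoR_one_eq_and_mul_eq_neg_one_pow m a ha
  obtain ⟨kb, hsb, hpb⟩ := exists_rhoR_one_eq_and_mul_eq_neg_one_pow m b hb
  have hshift := hC1 1 (Or.inl ⟨le_rfl, hZ⟩)
  have hend := hC1 m (Or.inr ⟨by omega, by omega⟩)
  rw [hsa, hsb] at hshift
  rw [rhoR_add_one_last, rhoR_add_one_last, hpa, hpb] at hend
  have hk : ka + kb = m := by exact_mod_cast (by linarith : (ka + kb : ℝ) = m)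
  have hpow : (-1 : ℝ) ^ (ka + kb) = -1 := by
    rw [pow_add, show (-1 : ℝ) ^ kb = -(-1) ^ ka by linarith, mul_neg, ← pow_add, ← two_mul,
      pow_mul, neg_one_sq, one_pow]
  have hodd : Odd (ka + kb) := (neg_one_pow_eq_neg_one_iff_odd (by norm_num)).1 hpow
  exact hk ▸ hodd.add_one

/-- A binary (N,Z)-CZCP over {-1,+1} with Z ≥ 1 must have even length N. -/
theorem stmt7 (N Z : ℕ) (hZ : 1 ≤ Z) (a b : ℕ → ℝ)
    (ha : ∀ n < N, a n = 1 ∨ a n = -1) (hb : ∀ n < N, b n = 1 ∨ b n = -1)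
    (hC1 : ∀ τ, (1 ≤ τ ∧ τ ≤ Z) ∨ (N - Z ≤ τ ∧ τ ≤ N - 1) →
      rhoR N a a τ + rhoR N b b τ = 0)
    (hC2 : ∀ τ, N - Z ≤ τ → τ ≤ N - 1 → rhoR N a b τ + rhoR N b a τ = 0) :
    Even N :=
  stmt7_general N Z hZ a b ha hb hC1
end

section
/- Let (a,b) be a binary (N,Z)-CZCP over {-1,+1}. Then a_i + a_{N-1-i} + b_i + b_{N-1-i} = ±2 for all i ∈ {0,1,...,Z-1}. -/
/-!
The condition `ρ(a)(0) + ρ(b)(0) = 2N ≠ 0` forces `Z < N`. Write `c n = a n * b n`. For ±1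
entries, `a n b n + a m b m - (a n b m + b n a m)` equals `(a n - a m) (b n - b m)`, a product
of two even numbers, so the condition `ρ(a,b)(τ) + ρ(b,a)(τ) = 0` at `τ = N - 1 - i` gives
`∑_{n ≤ i} (c n + c (n + τ)) ≡ 0 (mod 4)`. By strong induction on `i`, the terms `c (n + τ)`
with `n ≥ 1` cancel the terms `c n` with `n < i`, leaving `c i + c (N - 1 - i) ≡ 0 (mod 4)`,
i.e. `c i = -c (N - 1 - i)`. This sign relation between `(a i, b i)` and
`(a (N-1-i), b (N-1-i))` forces the sum to be `±2`.
-/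

open Finset

theorem exists_sub_eq_two_mul_of_pm_one {R : Type*} [CommRing R] {x y : R}
    (hx : x = 1 ∨ x = -1) (hy : y = 1 ∨ y = -1) : ∃ k : ℤ, x - y = 2 * k := by
  rcases hx with rfl | rfl <;> rcases hy with rfl | rfl
  exacts [⟨0, by simp⟩, ⟨1, by norm_num⟩, ⟨-1, by norm_num⟩, ⟨0, by simp⟩]

theorem sub_mul_sub_mem_zmultiples_four {R : Type*} [CommRing R] {x y z w : R}
    (hx : x = 1 ∨ x = -1) (hy : y = 1 ∨ y = -1) (hz : z = 1 ∨ z = -1) (hw : w = 1 ∨ w = -1) :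
    (x - z) * (y - w) ∈ AddSubgroup.zmultiples (4 : R) := by
  obtain ⟨k, hk⟩ := exists_sub_eq_two_mul_of_pm_one hx hz
  obtain ⟨l, hl⟩ := exists_sub_eq_two_mul_of_pm_one hy hw
  refine AddSubgroup.mem_zmultiples_iff.mpr ⟨k * l, ?_⟩
  rw [hk, hl, zsmul_eq_mul]
  push_cast
  ring

theorem add_eq_zero_of_mem_zmultiples_four {x y : ℝ} (hx : x = 1 ∨ x = -1)
    (hy : y = 1 ∨ y = -1) (h : x + y ∈ AddSubgroup.zmultiples (4 : ℝ)) : x + y = 0 := by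
  obtain ⟨k, hk⟩ := AddSubgroup.mem_zmultiples_iff.mp h
  rw [zsmul_eq_mul] at hk
  rcases hx with rfl | rfl <;> rcases hy with rfl | rfl
  · have : k * 4 = 1 + 1 := by exact_mod_cast hk
    omega
  · norm_num
  · norm_num
  · have : k * 4 = -1 + -1 := by exact_mod_cast hk
    omega

theorem sum_range_add_shift_eq_of_reflect_neg {G : Type*} [AddCommGroup G] (c : ℕ → G)
    {i τ : ℕ} (h : ∀ m < i, c (τ + i - m) = -c m) :
    ∑ n ∈ range (i + 1), (c n + c (n + τ)) = c i + c τ := by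
  have hshift : ∑ n ∈ range i, c (n + 1 + τ) = -∑ n ∈ range i, c n := by
    rw [← sum_range_reflect c i, ← sum_neg_distrib]
    refine sum_congr rfl fun n hn => ?_
    rw [mem_range] at hn
    rw [← h _ (by omega), show τ + i - (i - 1 - n) = n + 1 + τ by omega]
  rw [sum_add_distrib, sum_range_succ, sum_range_succ', hshift, zero_add]
  abel

theorem rhoR_self_zero {N : ℕ} {a : ℕ → ℝ} (ha : ∀ n < N, a n = 1 ∨ a n = -1) :
    rhoR N a a 0 = N := by
  calc rhoR N a a 0 = ∑ n ∈ range N, (1 : ℝ) :=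
        sum_congr rfl fun n hn => by rcases ha n (mem_range.mp hn) with h | h <;> simp [h]
    _ = N := by simp

theorem sum_mul_add_mul_sub_rhoR_add_rhoR_mem_zmultiples {N : ℕ} {a b : ℕ → ℝ}
    (ha : ∀ n < N, a n = 1 ∨ a n = -1) (hb : ∀ n < N, b n = 1 ∨ b n = -1) (τ : ℕ) :
    ∑ n ∈ range (N - τ), (a n * b n + a (n + τ) * b (n + τ))
      - (rhoR N a b τ + rhoR N b a τ) ∈ AddSubgroup.zmultiples (4 : ℝ) := by
  unfold rhoR
  rw [← sum_add_distrib, ← sum_sub_distrib]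
  refine AddSubgroup.sum_mem _ fun n hn => ?_
  rw [mem_range] at hn
  have hnτ : n + τ < N := by omega
  replace hn : n < N := by omega
  convert sub_mul_sub_mem_zmultiples_four (ha n hn) (hb n hn) (ha _ hnτ) (hb _ hnτ) using 1
  ring

theorem mul_add_mul_reflect_eq_zero {N Z : ℕ} (hZN : Z < N) {a b : ℕ → ℝ}
    (ha : ∀ n < N, a n = 1 ∨ a n = -1) (hb : ∀ n < N, b n = 1 ∨ b n = -1)
    (hC2 : ∀ τ, N - Z ≤ τ → τ ≤ N - 1 → rhoR N a b τ + rhoR N b a τ = 0) :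
    ∀ i < Z, a i * b i + a (N - 1 - i) * b (N - 1 - i) = 0 := by
  intro i
  induction i using Nat.strong_induction_on with
  | _ i ih =>
  intro hi
  have hc : ∀ n < N, a n * b n = 1 ∨ a n * b n = -1 := fun n hn => by
    rcases ha n hn with h | h <;> rcases hb n hn with h' | h' <;> simp [h, h']
  have hsum : ∑ n ∈ range (i + 1), (a n * b n + a (n + (N - 1 - i)) * b (n + (N - 1 - i)))
      = a i * b i + a (N - 1 - i) * b (N - 1 - i) :=
    sum_range_add_shift_eq_of_reflect_neg (fun n => a n * b n) fun m hm => by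
      rw [show N - 1 - i + i - m = N - 1 - m by omega]
      exact eq_neg_of_add_eq_zero_right (ih m hm (by omega))
  have hmem := sum_mul_add_mul_sub_rhoR_add_rhoR_mem_zmultiples ha hb (N - 1 - i)
  rw [hC2 _ (by omega) (by omega), sub_zero, show N - (N - 1 - i) = i + 1 by omega,
    hsum] at hmem
  exact add_eq_zero_of_mem_zmultiples_four (hc i (by omega)) (hc _ (by omega)) hmem

theorem add_add_add_eq_two_or_of_mul_add_mul_eq_zero {x y z w : ℝ} (hx : x = 1 ∨ x = -1)
    (hy : y = 1 ∨ y = -1) (hz : z = 1 ∨ z = -1) (hw : w = 1 ∨ w = -1)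
    (h : x * y + z * w = 0) : x + z + y + w = 2 ∨ x + z + y + w = -2 := by
  rcases hx with rfl | rfl <;> rcases hy with rfl | rfl <;> rcases hz with rfl | rfl <;>
    rcases hw with rfl | rfl <;> revert h <;> norm_num

/-- For a binary (N,Z)-CZCP (a,b) over {-1,+1}:
a_i + a_{N-1-i} + b_i + b_{N-1-i} = ±2 for all i ∈ {0,...,Z-1}. -/
theorem stmt8 (N Z : ℕ) (hN : 1 ≤ N) (a b : ℕ → ℝ)
    (ha : ∀ n < N, a n = 1 ∨ a n = -1) (hb : ∀ n < N, b n = 1 ∨ b n = -1)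
    (hC1 : ∀ τ, (1 ≤ τ ∧ τ ≤ Z) ∨ (N - Z ≤ τ ∧ τ ≤ N - 1) →
      rhoR N a a τ + rhoR N b b τ = 0)
    (hC2 : ∀ τ, N - Z ≤ τ → τ ≤ N - 1 → rhoR N a b τ + rhoR N b a τ = 0) :
    ∀ i < Z, a i + a (N - 1 - i) + b i + b (N - 1 - i) = 2 ∨
             a i + a (N - 1 - i) + b i + b (N - 1 - i) = -2 := by
  have hZN : Z < N := by
    by_contra! hNZ
    have h0 := hC1 0 (Or.inr ⟨by omega, by omega⟩)
    rw [rhoR_self_zero ha, rhoR_self_zero hb] at h0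
    have : (1 : ℝ) ≤ N := by exact_mod_cast hN
    linarith
  intro i hi
  have hiN : i < N := hi.trans hZN
  have hjN : N - 1 - i < N := by omega
  exact add_add_add_eq_two_or_of_mul_add_mul_eq_zero (ha i hiN) (hb i hiN) (ha _ hjN)
    (hb _ hjN) (mul_add_mul_reflect_eq_zero hZN ha hb hC2 i hi)
end

section
/- Let (e,f) be a q-ary Golay complementary pair of length M (q even), and let υ₁, υ₂, υ ∈ ℤ_q with υ₁ - υ₂ ≡ 0 or q/2 (mod q). Define a = [ω^{υ₁}·e, ω^{υ₁+υ}·f] and b = [ω^{υ₂}·e, -ω^{υ₂+υ}·f], concatenations of length N = 2M, where ω = exp(2πi/q). Then ρ(a,b)(τ) + ρ(b,a)(τ) = 0 for all τ with M ≤ τ ≤ 2M-1. -/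
/-! For `M ≤ τ` only the first half of one sequence meets the second half of the other, so
`ρ(a,b)(τ) + ρ(b,a)(τ) = (ω^(υ₂-υ₁-υ) - ω^(υ₁-υ₂-υ)) · ρ(e,f)(τ-M)`. The bracket vanishes because
`υ₁ - υ₂ ≡ 0` or `q/2` gives `q ∣ 2(υ₁ - υ₂)`, hence `ω^(2(υ₁-υ₂)) = 1`. -/

open Finset

def concat (M : ℕ) (x y : ℕ → ℂ) (n : ℕ) : ℂ := if n < M then x n else y (n - M)

theorem rho_two_mul_concat_of_le {M τ : ℕ} (x y u v : ℕ → ℂ) (hτ : M ≤ τ) :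
    rho (2 * M) (concat M x y) (concat M u v) τ = rho M x v (τ - M) := by
  rw [rho, rho, show M - (τ - M) = 2 * M - τ by omega]
  refine sum_congr rfl fun n hn => ?_
  have hn : n < 2 * M - τ := mem_range.mp hn
  rw [concat, concat, if_pos (by omega), if_neg (by omega), Nat.add_sub_assoc hτ]

theorem rho_smul_left (N τ : ℕ) (c : ℂ) (x y : ℕ → ℂ) :
    rho N (c • x) y τ = c * rho N x y τ := by
  simp only [rho, mul_sum, Pi.smul_apply, smul_eq_mul, mul_assoc]

theorem rho_smul_right (N τ : ℕ) (c : ℂ) (x y : ℕ → ℂ) :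
    rho N x (c • y) τ = starRingEnd ℂ c * rho N x y τ := by
  simp only [rho, mul_sum, Pi.smul_apply, smul_eq_mul, map_mul, mul_left_comm]

theorem rho_neg_right (N τ : ℕ) (x y : ℕ → ℂ) : rho N x (-y) τ = -rho N x y τ := by
  simp only [rho, Pi.neg_apply, map_neg, mul_neg, sum_neg_distrib]

theorem norm_exp_two_pi_I_div (q : ℕ) : ‖Complex.exp (2 * Real.pi * Complex.I / q)‖ = 1 := by
  rw [Complex.norm_exp]; simp

theorem exp_two_pi_I_div_zpow_eq_one {q : ℕ} {k : ℤ} (hk : (q : ℤ) ∣ k) :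
    Complex.exp (2 * Real.pi * Complex.I / q) ^ k = 1 := by
  obtain ⟨m, rfl⟩ := hk
  rw [zpow_mul, zpow_natCast, ← Complex.exp_nat_mul]
  rcases Nat.eq_zero_or_pos q with rfl | hq
  · simp
  · rw [mul_div_cancel₀ _ (by exact_mod_cast hq.ne'), Complex.exp_two_pi_mul_I, one_zpow]

theorem Int.dvd_two_mul_of_emod_eq_zero_or_half {n d : ℤ} (hn : 2 ∣ n)
    (h : d % n = 0 ∨ d % n = n / 2) : n ∣ 2 * d := by
  rcases h with h | h
  · exact (Int.dvd_of_emod_eq_zero h).mul_left 2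
  · obtain ⟨k, rfl⟩ := hn
    refine ⟨2 * (d / (2 * k)) + 1, ?_⟩
    have hd := Int.emod_add_mul_ediv d (2 * k)
    rw [h, Int.mul_ediv_cancel_left k two_ne_zero] at hd
    linear_combination -2 * hd

theorem conj_zpow_of_norm_eq_one {ω : ℂ} (hω : ‖ω‖ = 1) (z : ℤ) :
    starRingEnd ℂ (ω ^ z) = ω ^ (-z) := by
  rw [map_zpow₀, ← Complex.inv_eq_conj hω, inv_zpow', zpow_neg]

theorem zpow_mul_conj_zpow_add_comm {ω : ℂ} (hω : ‖ω‖ = 1) {a b : ℤ}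
    (hab : ω ^ (2 * (a - b)) = 1) (c : ℤ) :
    ω ^ a * starRingEnd ℂ (ω ^ (b + c)) = ω ^ b * starRingEnd ℂ (ω ^ (a + c)) := by
  have hω0 : ω ≠ 0 := norm_ne_zero_iff.mp (by rw [hω]; exact one_ne_zero)
  rw [conj_zpow_of_norm_eq_one hω, conj_zpow_of_norm_eq_one hω, ← zpow_add₀ hω0,
    ← zpow_add₀ hω0]
  calc ω ^ (a + -(b + c)) = ω ^ (b + -(a + c)) * ω ^ (2 * (a - b)) := by
        rw [← zpow_add₀ hω0]; ring_nf
    _ = ω ^ (b + -(a + c)) := by rw [hab, mul_one]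

theorem stmt9_general (q M : ℕ) (hq : Even q)
    (e f : ℕ → ℂ)
    (υ1 υ2 υ : ℤ)
    (hυ : (υ1 - υ2) % (q : ℤ) = 0 ∨ (υ1 - υ2) % (q : ℤ) = (q : ℤ) / 2) :
    ∀ τ, M ≤ τ → τ ≤ 2 * M - 1 →
      (rho (2 * M)
        (fun n => if n < M then Complex.exp (2 * Real.pi * Complex.I / q) ^ υ1 * e n
                  else Complex.exp (2 * Real.pi * Complex.I / q) ^ (υ1 + υ) * f (n - M))
        (fun n => if n < M then Complex.exp (2 * Real.pi * Complex.I / q) ^ υ2 * e n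
                  else -(Complex.exp (2 * Real.pi * Complex.I / q) ^ (υ2 + υ) * f (n - M))) τ)
      + (rho (2 * M)
        (fun n => if n < M then Complex.exp (2 * Real.pi * Complex.I / q) ^ υ2 * e n
                  else -(Complex.exp (2 * Real.pi * Complex.I / q) ^ (υ2 + υ) * f (n - M)))
        (fun n => if n < M then Complex.exp (2 * Real.pi * Complex.I / q) ^ υ1 * e n
                  else Complex.exp (2 * Real.pi * Complex.I / q) ^ (υ1 + υ) * f (n - M)) τ) = 0 := by
  intro τ hτ _
  set ω := Complex.exp (2 * Real.pi * Complex.I / q)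
  have hroot : ω ^ (2 * (υ1 - υ2)) = 1 := exp_two_pi_I_div_zpow_eq_one
    (Int.dvd_two_mul_of_emod_eq_zero_or_half (by exact_mod_cast hq.two_dvd) hυ)
  change rho (2 * M) (concat M (ω ^ υ1 • e) (ω ^ (υ1 + υ) • f))
      (concat M (ω ^ υ2 • e) (-(ω ^ (υ2 + υ) • f))) τ
    + rho (2 * M) (concat M (ω ^ υ2 • e) (-(ω ^ (υ2 + υ) • f)))
      (concat M (ω ^ υ1 • e) (ω ^ (υ1 + υ) • f)) τ = 0
  rw [rho_two_mul_concat_of_le _ _ _ _ hτ, rho_two_mul_concat_of_le _ _ _ _ hτ, rho_neg_right,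
    rho_smul_left, rho_smul_left, rho_smul_right, rho_smul_right]
  linear_combination (-rho M e f (τ - M)) *
    zpow_mul_conj_zpow_add_comm (norm_exp_two_pi_I_div q) hroot υ

/-- From a q-ary GCP (e,f) of length M (q even) and υ₁-υ₂ ≡ 0 or q/2 (mod q),
the concatenated pair a = [ω^{υ₁}e, ω^{υ₁+υ}f], b = [ω^{υ₂}e, -ω^{υ₂+υ}f] has zero
cross-correlation sums ρ(a,b)(τ)+ρ(b,a)(τ)=0 for M ≤ τ ≤ 2M-1. -/
theorem stmt9 (q M : ℕ) (hq : Even q) (hq0 : 0 < q)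
    (e f : ℕ → ℂ)
    (he : ∀ n < M, (e n) ^ q = 1) (hf : ∀ n < M, (f n) ^ q = 1)
    (hGCP : ∀ τ, 1 ≤ τ → τ ≤ M - 1 → rho M e e τ + rho M f f τ = 0)
    (υ1 υ2 υ : ℤ)
    (hυ : (υ1 - υ2) % (q : ℤ) = 0 ∨ (υ1 - υ2) % (q : ℤ) = (q : ℤ) / 2) :
    ∀ τ, M ≤ τ → τ ≤ 2 * M - 1 →
      (rho (2 * M)
        (fun n => if n < M then Complex.exp (2 * Real.pi * Complex.I / q) ^ υ1 * e n
                  else Complex.exp (2 * Real.pi * Complex.I / q) ^ (υ1 + υ) * f (n - M))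
        (fun n => if n < M then Complex.exp (2 * Real.pi * Complex.I / q) ^ υ2 * e n
                  else -(Complex.exp (2 * Real.pi * Complex.I / q) ^ (υ2 + υ) * f (n - M))) τ)
      + (rho (2 * M)
        (fun n => if n < M then Complex.exp (2 * Real.pi * Complex.I / q) ^ υ2 * e n
                  else -(Complex.exp (2 * Real.pi * Complex.I / q) ^ (υ2 + υ) * f (n - M)))
        (fun n => if n < M then Complex.exp (2 * Real.pi * Complex.I / q) ^ υ1 * e n
                  else Complex.exp (2 * Real.pi * Complex.I / q) ^ (υ1 + υ) * f (n - M)) τ) = 0 :=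
  stmt9_general q M hq e f υ1 υ2 υ hυ
end

section
/- Let (a,b) be an (N,Z)-CZCP, and for even M define sequences a_m = a if m is odd and a_m = b if m is even, for m = 1,...,M. Then {a_1,...,a_M} is an (N,Z)-CZCS: Σ_{m=1}^M ρ(a_m)(τ) = 0 for all τ with 1 ≤ τ ≤ Z or N-Z ≤ τ ≤ N-1, and Σ_{m=1}^M ρ(a_m, a_{(m mod M)+1})(τ) = 0 for all τ with N-Z ≤ τ ≤ N-1. -/
open Finset

/-- The m-th sequence: a if m is odd, b if m is even. -/
def am (a b : ℕ → ℂ) (m : ℕ) : ℕ → ℂ := if m % 2 = 1 then a else b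

/-! For even `M`, the sequences `a₁, …, a_M` split into consecutive pairs `(a, b)`, and the cyclic
successor `m % M + 1` has the same parity as `m + 1`; so both sums are sums of `k = M / 2` copies
of the corresponding pair sums `ρ(a) + ρ(b)` and `ρ(a, b) + ρ(b, a)`, which vanish by hypothesis. -/

theorem Finset.sum_Icc_one_two_mul_eq_sum_pairs {β : Type*} [AddCommMonoid β] (f : ℕ → β)
    (k : ℕ) :
    ∑ m ∈ Icc 1 (2 * k), f m = ∑ j ∈ range k, (f (2 * j + 1) + f (2 * j + 2)) := by
  induction k with
  | zero => simp
  | succ k ih =>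
    rw [show 2 * (k + 1) = 2 * k + 1 + 1 by ring, sum_Icc_succ_top (by omega),
      sum_Icc_succ_top (by omega), ih, sum_range_succ, add_assoc]

section am

variable (a b : ℕ → ℂ) {m : ℕ}

theorem am_of_odd (h : Odd m) : am a b m = a := by
  simp [am, Nat.odd_iff.mp h]

theorem am_of_even (h : Even m) : am a b m = b := by
  simp [am, Nat.even_iff.mp h]

theorem am_mod_add_one {M : ℕ} (hM : Even M) (m : ℕ) : am a b (m % M + 1) = am a b (m + 1) := by
  have hpar : (m % M + 1) % 2 = (m + 1) % 2 := by
    rw [Nat.add_mod, Nat.mod_mod_of_dvd m (even_iff_two_dvd.mp hM), ← Nat.add_mod]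
  simp only [am, hpar]

end am

/-- From an (N,Z)-CZCP (a,b) and even M, the set {a_1,...,a_M} with a_m = a for odd m
and a_m = b for even m is an (N,Z)-CZCS. -/
theorem stmt12 (N Z M : ℕ) (hM : Even M) (a b : ℕ → ℂ)
    (hC1 : ∀ τ, (1 ≤ τ ∧ τ ≤ Z) ∨ (N - Z ≤ τ ∧ τ ≤ N - 1) →
      rho N a a τ + rho N b b τ = 0)
    (hC2 : ∀ τ, N - Z ≤ τ → τ ≤ N - 1 → rho N a b τ + rho N b a τ = 0) :
    (∀ τ, (1 ≤ τ ∧ τ ≤ Z) ∨ (N - Z ≤ τ ∧ τ ≤ N - 1) →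
      ∑ m ∈ Finset.Icc 1 M, rho N (am a b m) (am a b m) τ = 0) ∧
    (∀ τ, N - Z ≤ τ → τ ≤ N - 1 →
      ∑ m ∈ Finset.Icc 1 M, rho N (am a b m) (am a b (m % M + 1)) τ = 0) := by
  obtain ⟨k, rfl⟩ := hM.two_dvd
  have h_odd (j : ℕ) : am a b (2 * j + 1) = a := am_of_odd a b (odd_two_mul_add_one j)
  have h_even (j : ℕ) : am a b (2 * j + 2) = b := am_of_even a b ⟨j + 1, by ring⟩
  constructor
  · intro τ hτ
    rw [sum_Icc_one_two_mul_eq_sum_pairs]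
    exact sum_eq_zero fun j _ => by rw [h_odd, h_even]; exact hC1 τ hτ
  · intro τ hτ₁ hτ₂
    simp only [am_mod_add_one a b (even_two_mul k)]
    rw [sum_Icc_one_two_mul_eq_sum_pairs]
    refine sum_eq_zero fun j _ => ?_
    rw [show 2 * j + 2 + 1 = 2 * (j + 1) + 1 by ring, h_odd, h_even, h_odd]
    exact hC2 τ hτ₁ hτ₂
end
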